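/- arXiv:1711.11257 — 6 statements merged into one kernel-verified Lean document; each statement's English description precedes it below -/
import Mathlib

section
/- If G is a 2-connected graph of order n and d(u)+d(v) ≥ n+1 for every pair of distinct nonadjacent vertices u and v, then G is Hamilton-connected (every two vertices of G are connected by a Hamiltonian path). -/
open Classical SimpleGraph

noncomputable section

/-- Degree of a vertex (via `Set.ncard`, avoiding decidability assumptions). -/
noncomputable def gdeg {V : Type*} (G : SimpleGraph V) (v : V) : ℕ :=
  (G.neighborSet v).ncard

/-- A graph is Hamilton-connected if every two distinct vertices are joined by a
Hamiltonian path. -/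
def HamConnected {V : Type*} (G : SimpleGraph V) : Prop :=
  ∀ u v : V, u ≠ v → ∃ p : G.Walk u v, p.IsHamiltonian

/-- `G` is 2-connected: at least 3 vertices and deleting any vertex leaves a connected graph. -/
def TwoConnected {V : Type*} [Fintype V] (G : SimpleGraph V) : Prop :=
  3 ≤ Fintype.card V ∧ ∀ v : V, (G.induce {w : V | w ≠ v}).Connected

/-!
Bondy–Chvátal closure. Adding an edge `uv` between nonadjacent `u, v` preserves the degree
condition, so by induction on the number of missing edges (the complete graph being the base
case) `G ⊔ uv` has a Hamiltonian `a`–`b` path `x₀ … x_{n-1}`. If it uses `uv`, say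
`u = xᵢ, v = x_{i+1}`, then among the `n - 2` positions `j ∉ {i, n - 1}` there are at least
`d(u) - 1` with `u ~ xⱼ` and at least `d(v) - 1` with `v ~ x_{j+1}`; since `d(u) + d(v) ≥ n + 1`
some `j` has both, and reversing the segment between the edges `xᵢx_{i+1}` and `xⱼx_{j+1}`
(a 2-opt move) gives a Hamiltonian `a`–`b` path of `G`.
-/

def reverseBlock (p q k : ℕ) : ℕ :=
  if p < k ∧ k ≤ q then p + q + 1 - k else k

lemma reverseBlock_involutive (p q : ℕ) : Function.Involutive (reverseBlock p q) := by
  intro k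
  simp only [reverseBlock]
  split_ifs <;> omega

lemma reverseBlock_bijOn_Iio {p q n : ℕ} (hq : q < n) :
    Set.BijOn (reverseBlock p q) (Set.Iio n) (Set.Iio n) := by
  have hmaps : Set.MapsTo (reverseBlock p q) (Set.Iio n) (Set.Iio n) := by
    intro k (hk : k < n)
    show reverseBlock p q k < n
    simp only [reverseBlock]
    split_ifs <;> omega
  refine ⟨hmaps, (reverseBlock_involutive p q).injective.injOn, fun k hk => ?_⟩
  exact ⟨reverseBlock p q k, hmaps hk, reverseBlock_involutive p q k⟩

lemma exists_walk_support_eq_map_range {V : Type*} (G : SimpleGraph V) (x : ℕ → V) :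
    ∀ m, (∀ k < m, G.Adj (x k) (x (k + 1))) →
      ∃ p : G.Walk (x 0) (x m), p.support = (List.range (m + 1)).map x
  | 0, _ => ⟨Walk.nil, by simp⟩
  | m + 1, h => by
    obtain ⟨p, hp⟩ := exists_walk_support_eq_map_range G x m fun k hk => h k (by omega)
    refine ⟨p.concat (h m (by omega)), ?_⟩
    rw [Walk.support_concat, hp, List.range_succ (n := m + 1), List.map_append,
      List.map_singleton]

lemma card_le_card_filter_range_add_one {V : Type*} (s : Finset V) (f : ℕ → V) (m : ℕ) (c : V)
    (hf : ∀ w, w ≠ c → ∃ k < m, f k = w) :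
    s.card ≤ ((Finset.range m).filter fun k => f k ∈ s).card + 1 := by
  have hsub : s ⊆ insert c (((Finset.range m).filter fun k => f k ∈ s).image f) := by
    intro w hw
    by_cases hwc : w = c
    · exact hwc ▸ Finset.mem_insert_self _ _
    obtain ⟨k, hk, rfl⟩ := hf w hwc
    exact Finset.mem_insert_of_mem (Finset.mem_image_of_mem f (by simpa [hk] using hw))
  calc s.card ≤ _ := Finset.card_le_card hsub
    _ ≤ _ := Finset.card_insert_le _ _
    _ ≤ _ := Nat.add_le_add_right Finset.card_image_le _

lemma gdeg_eq_card_neighborFinset {V : Type*} [Fintype V] (G : SimpleGraph V) (v : V) :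
    gdeg G v = (G.neighborFinset v).card :=
  Set.ncard_eq_toFinset_card' _

lemma gdeg_mono {V : Type*} {G H : SimpleGraph V} [Finite V] (hGH : G ≤ H) (v : V) :
    gdeg G v ≤ gdeg H v :=
  Set.ncard_le_ncard (neighborSet_mono hGH v) (Set.toFinite _)

section HamSeq

variable {V : Type*} [Fintype V] {G : SimpleGraph V} {a b : V} {x : ℕ → V}

/-- A Hamiltonian path of `G` from `a` to `b`, encoded by its list of vertices
`x 0, x 1, …, x (card V - 1)`. -/
structure IsHamSeq (G : SimpleGraph V) (a b : V) (x : ℕ → V) : Prop where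
  first : x 0 = a
  last : x (Fintype.card V - 1) = b
  adj : ∀ k, k + 1 < Fintype.card V → G.Adj (x k) (x (k + 1))
  bijOn : Set.BijOn x (Set.Iio (Fintype.card V)) Set.univ

lemma IsHamSeq.exists_isHamiltonian (hx : IsHamSeq G a b x) :
    ∃ p : G.Walk a b, p.IsHamiltonian := by
  have hn : Fintype.card V - 1 + 1 = Fintype.card V :=
    Nat.sub_add_cancel (Fintype.card_pos_iff.2 ⟨a⟩)
  obtain ⟨p, hp⟩ := exists_walk_support_eq_map_range G x (Fintype.card V - 1)
    fun k hk => hx.adj k (by omega)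
  rw [hn] at hp
  refine ⟨p.copy hx.first hx.last, (Walk.IsPath.mk' ?_).isHamiltonian_of_mem fun w => ?_⟩
  · rw [Walk.support_copy, hp]
    exact List.nodup_range.map_on fun k hk l hl =>
      hx.bijOn.injOn (List.mem_range.1 hk) (List.mem_range.1 hl)
  · obtain ⟨k, hk, rfl⟩ := hx.bijOn.surjOn (Set.mem_univ w)
    rw [Walk.support_copy, hp]
    exact List.mem_map_of_mem (List.mem_range.2 hk)

lemma exists_bijOn_Iio_card (hab : a ≠ b) :
    ∃ x : ℕ → V, Set.BijOn x (Set.Iio (Fintype.card V)) Set.univ ∧ x 0 = a ∧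
      x (Fintype.card V - 1) = b := by
  set n := Fintype.card V
  have hn : 2 ≤ n := Fintype.one_lt_card_iff_nontrivial.2 ⟨a, b, hab⟩
  let first : Fin n := ⟨0, by omega⟩
  let last : Fin n := ⟨n - 1, by omega⟩
  have hfl : first ≠ last := fun h => by simp [first, last, Fin.ext_iff] at h; omega
  let e₀ : Fin n ≃ V := (Fintype.equivFin V).symm
  let e₁ : Fin n ≃ V := e₀.trans (Equiv.swap (e₀ first) a)
  let e : Fin n ≃ V := e₁.trans (Equiv.swap (e₁ last) b)
  have he₁ : e₁ first = a := Equiv.swap_apply_left _ _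
  have hfirst : e first = a := by
    have hne : e₁ last ≠ a := he₁ ▸ e₁.injective.ne hfl.symm
    exact (congrArg _ he₁).trans (Equiv.swap_apply_of_ne_of_ne hne.symm hab)
  refine ⟨fun k => if hk : k < n then e ⟨k, hk⟩ else a,
    ⟨fun _ _ => Set.mem_univ _, ?_, ?_⟩, (dif_pos _).trans hfirst, (dif_pos _).trans (Equiv.swap_apply_left _ _)⟩
  · intro k (hk : k < n) l (hl : l < n) h
    simp only [dif_pos hk, dif_pos hl] at h
    exact congrArg Fin.val (e.injective h)
  · exact fun w _ => ⟨e.symm w, (e.symm w).2, (dif_pos _).trans (e.apply_symm_apply w)⟩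

lemma exists_isHamSeq_top (hab : a ≠ b) : ∃ x, IsHamSeq (⊤ : SimpleGraph V) a b x := by
  obtain ⟨x, hx, hfirst, hlast⟩ := exists_bijOn_Iio_card hab
  refine ⟨x, hfirst, hlast, fun k hk => (top_adj _ _).2 fun h => ?_, hx⟩
  have := hx.injOn (show k < Fintype.card V by omega) (show k + 1 < Fintype.card V from hk) h
  omega

lemma isHamSeq_comp_reverseBlock {p q : ℕ}
    (hx : Set.BijOn x (Set.Iio (Fintype.card V)) Set.univ)
    (hpq : p < q) (hq : q + 1 < Fintype.card V)
    (hadj : ∀ k, k + 1 < Fintype.card V → k ≠ p → k ≠ q → G.Adj (x k) (x (k + 1)))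
    (hp : G.Adj (x p) (x q)) (hp' : G.Adj (x (p + 1)) (x (q + 1))) :
    IsHamSeq G (x 0) (x (Fintype.card V - 1)) (x ∘ reverseBlock p q) := by
  refine ⟨?_, ?_, fun k hk => ?_, hx.comp (reverseBlock_bijOn_Iio (by omega))⟩
  · simp [reverseBlock]
  · exact congrArg x (if_neg (by omega))
  simp only [Function.comp_apply, reverseBlock]
  split_ifs with hk₁ hk₂ hk₂
  · rw [show p + q + 1 - k = p + q - k + 1 by omega,
      show p + q + 1 - (k + 1) = p + q - k by omega]
    exact (hadj (p + q - k) (by omega) (by omega) (by omega)).symm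
  · obtain rfl : k = q := by omega
    rwa [show p + k + 1 - k = p + 1 by omega]
  · obtain rfl : k = p := by omega
    rwa [show k + q + 1 - (k + 1) = q by omega]
  · exact hadj k hk (by omega) (by omega)

lemma exists_isHamSeq_of_adj_except {i : ℕ}
    (hx : Set.BijOn x (Set.Iio (Fintype.card V)) Set.univ)
    (hi : i + 1 < Fintype.card V)
    (hadj : ∀ k, k + 1 < Fintype.card V → k ≠ i → G.Adj (x k) (x (k + 1)))
    (hdeg : Fintype.card V + 1 ≤ gdeg G (x i) + gdeg G (x (i + 1))) :
    ∃ y, IsHamSeq G (x 0) (x (Fintype.card V - 1)) y := by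
  set n := Fintype.card V
  set S := (Finset.range (n - 1)).filter fun k => x k ∈ G.neighborFinset (x i)
  set T := (Finset.range (n - 1)).filter fun k => x (k + 1) ∈ G.neighborFinset (x (i + 1))
  have hS : gdeg G (x i) ≤ S.card + 1 := by
    rw [gdeg_eq_card_neighborFinset]
    refine card_le_card_filter_range_add_one _ _ _ (x (n - 1)) fun w hw => ?_
    obtain ⟨k, hk : k < n, rfl⟩ := hx.surjOn (Set.mem_univ w)
    exact ⟨k, by grind, rfl⟩
  have hT : gdeg G (x (i + 1)) ≤ T.card + 1 := by
    rw [gdeg_eq_card_neighborFinset]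
    refine card_le_card_filter_range_add_one _ _ _ (x 0) fun w hw => ?_
    obtain ⟨k, hk : k < n, rfl⟩ := hx.surjOn (Set.mem_univ w)
    exact ⟨k - 1, by grind, by grind⟩
  have hSi : S ⊆ (Finset.range (n - 1)).erase i := by
    intro k hk
    simp only [S, Finset.mem_filter, mem_neighborFinset] at hk
    exact Finset.mem_erase.2 ⟨by rintro rfl; exact hk.2.ne rfl, hk.1⟩
  have hTi : T ⊆ (Finset.range (n - 1)).erase i := by
    intro k hk
    simp only [T, Finset.mem_filter, mem_neighborFinset] at hk
    exact Finset.mem_erase.2 ⟨by rintro rfl; exact hk.2.ne rfl, hk.1⟩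
  -- Pigeonhole: `S` and `T` avoid `i` in `range (n - 1)` but have more than `n - 2` elements
  -- between them.
  obtain ⟨j, hj⟩ := Finset.inter_nonempty_of_card_lt_card_add_card hSi hTi
    (by rw [Finset.card_erase_of_mem (Finset.mem_range.2 (by omega)), Finset.card_range]; omega)
  simp only [S, T, Finset.mem_inter, Finset.mem_filter, Finset.mem_range,
    mem_neighborFinset] at hj
  obtain ⟨⟨hjn, hij⟩, -, hij'⟩ := hj
  rcases (show j ≠ i from fun h => hij.ne (h ▸ rfl)).lt_or_gt with hji | hji
  · exact ⟨_, isHamSeq_comp_reverseBlock hx hji hi (fun k hk _ hki => hadj k hk hki) hij.symm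
      hij'.symm⟩
  · exact ⟨_, isHamSeq_comp_reverseBlock hx hji (by omega) (fun k hk hki _ => hadj k hk hki) hij
      hij'⟩

lemma IsHamSeq.exists_of_sup_edge {u v : V} (hx : IsHamSeq (G ⊔ edge u v) a b x)
    (hdeg : Fintype.card V + 1 ≤ gdeg G u + gdeg G v) : ∃ y, IsHamSeq G a b y := by
  set n := Fintype.card V
  by_cases hG : ∀ k, k + 1 < n → G.Adj (x k) (x (k + 1))
  · exact ⟨x, hx.first, hx.last, hG, hx.bijOn⟩
  push Not at hG
  obtain ⟨i, hi, hna⟩ := hG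
  have hedge : ∀ k, k + 1 < n → ¬G.Adj (x k) (x (k + 1)) →
      s(x k, x (k + 1)) = s(u, v) :=
    fun k hk h => ((adj_edge _ _).1 ((hx.adj k hk).resolve_left h)).1.symm
  have hadj : ∀ k, k + 1 < n → k ≠ i → G.Adj (x k) (x (k + 1)) := by
    intro k hk hki
    by_contra h
    rcases Sym2.eq_iff.1 ((hedge k hk h).trans (hedge i hi hna).symm) with
      ⟨h₁, -⟩ | ⟨h₁, h₂⟩
    · exact hki (hx.bijOn.injOn (show k < n by omega) (show i < n by omega) h₁)
    · have := hx.bijOn.injOn (show k + 1 < n by omega) (show i < n by omega) h₂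
      have := hx.bijOn.injOn (show k < n by omega) (show i + 1 < n by omega) h₁
      omega
  have hdeg' : n + 1 ≤ gdeg G (x i) + gdeg G (x (i + 1)) := by
    rcases Sym2.eq_iff.1 (hedge i hi hna) with ⟨h₁, h₂⟩ | ⟨h₁, h₂⟩ <;> rw [h₁, h₂] <;> omega
  obtain ⟨y, hy⟩ := exists_isHamSeq_of_adj_except hx.bijOn hi hadj hdeg'
  exact ⟨y, hx.first ▸ hx.last ▸ hy⟩

theorem exists_isHamSeq_of_ore (G : SimpleGraph V)
    (hdeg : ∀ u v, u ≠ v → ¬G.Adj u v → Fintype.card V + 1 ≤ gdeg G u + gdeg G v)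
    (hab : a ≠ b) : ∃ x, IsHamSeq G a b x := by
  induction G using WellFoundedGT.induction with
  | _ G ih =>
  obtain rfl | hG := eq_or_ne G ⊤
  · exact exists_isHamSeq_top hab
  obtain ⟨u, v, huv, hna⟩ := ne_top_iff_exists_not_adj.1 hG
  have hle : G ≤ G ⊔ edge u v := le_sup_left
  have hdeg' : ∀ u' v', u' ≠ v' → ¬(G ⊔ edge u v).Adj u' v' →
      Fintype.card V + 1 ≤ gdeg (G ⊔ edge u v) u' + gdeg (G ⊔ edge u v) v' :=
    fun u' v' hne h => (hdeg u' v' hne fun h' => h (hle h')).trans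
      (add_le_add (gdeg_mono hle u') (gdeg_mono hle v'))
  obtain ⟨x, hx⟩ := ih _ (lt_sup_edge _ _ _ huv hna) hdeg'
  exact hx.exists_of_sup_edge (hdeg u v huv hna)

end HamSeq

theorem ore_hamilton_connected_general {V : Type*} [Fintype V] (G : SimpleGraph V)
    (hdeg : ∀ u v : V, u ≠ v → ¬ G.Adj u v →
      Fintype.card V + 1 ≤ gdeg G u + gdeg G v) :
    HamConnected G := by
  intro a b hab
  obtain ⟨x, hx⟩ := exists_isHamSeq_of_ore G hdeg hab
  exact hx.exists_isHamiltonian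

/-- **Ore-type condition (Lemma 2.1).** If `G` is a 2-connected graph of order `n` and
`d(u) + d(v) ≥ n + 1` for every pair of distinct nonadjacent vertices `u, v`, then `G` is
Hamilton-connected. -/
theorem ore_hamilton_connected {V : Type*} [Fintype V] (G : SimpleGraph V)
    (h2 : TwoConnected G)
    (hdeg : ∀ u v : V, u ≠ v → ¬ G.Adj u v →
      Fintype.card V + 1 ≤ gdeg G u + gdeg G v) :
    HamConnected G :=
  ore_hamilton_connected_general G hdeg

end
end

section
/- Let G be a graph and let G* be obtained from G by a Kelmans transformation at vertices u, v. Then the signless Laplacian spectral radius satisfies q(G) ≤ q(G*). -/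
open Classical SimpleGraph

noncomputable section

/-- The signless Laplacian matrix `Q(G) = D(G) + A(G)`. -/
noncomputable def signlessLap {V : Type*} [Fintype V] [DecidableEq V] (G : SimpleGraph V) :
    Matrix V V ℝ :=
  Matrix.of fun i j => (if i = j then (gdeg G i : ℝ) else 0) + (if G.Adj i j then 1 else 0)

/-- The signless Laplacian spectral radius: largest eigenvalue of `Q(G)`. -/
noncomputable def qrad {V : Type*} [Fintype V] [DecidableEq V] (G : SimpleGraph V) : ℝ :=
  sSup (spectrum ℝ (signlessLap G))

/-- The Kelmans transformation of `G` at vertices `u, v`: every edge `vx` with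
`x ∈ N(v) \ N[u]` is replaced by the edge `ux`. -/
noncomputable def kelmans {V : Type*} (G : SimpleGraph V) (u v : V) : SimpleGraph V :=
  SimpleGraph.fromRel (fun x y =>
    (G.Adj x y ∧ ¬ (x = v ∧ y ∈ G.neighborSet v \ insert u (G.neighborSet u)) ∧
      ¬ (y = v ∧ x ∈ G.neighborSet v \ insert u (G.neighborSet u))) ∨
    (x = u ∧ y ∈ G.neighborSet v \ insert u (G.neighborSet u)))

/-!
Pick `x ≥ 0`, `x ≠ 0`, with `q(G) xᵀ x ≤ xᵀ Q(G) x`: since `Q(G)` is entrywise nonnegative, the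
entrywise absolute value of an eigenvector for `q(G)` will do. As
`xᵀ Q(H) x = ∑_{ab ∈ E(H)} (x_a + x_b)²`, and `G*` arises from `G` by replacing the edges `vw`,
`w ∈ N(v) \ N[u]`, by `uw`, we get `xᵀ Q(G) x ≤ xᵀ Q(G*) x` when `x_v ≤ x_u`; the Rayleigh bound
`yᵀ Q(G*) y ≤ q(G*) yᵀ y` then gives `q(G) ≤ q(G*)`. When `x_u < x_v`, the same argument applies
to the transformation at `(v, u)`, whose result is isomorphic to `G*` via the transposition of
`u` and `v`.
-/

open Matrix

namespace Matrix

variable {n : Type*} [Fintype n] {M : Matrix n n ℝ}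

lemma dotProduct_mulVec_le_abs (hM : ∀ i j, 0 ≤ M i j) (x : n → ℝ) :
    x ⬝ᵥ M *ᵥ x ≤ |x| ⬝ᵥ M *ᵥ |x| := by
  simp only [dotProduct, mulVec, Finset.mul_sum, Pi.abs_apply]
  refine Finset.sum_le_sum fun i _ => Finset.sum_le_sum fun j _ => ?_
  calc x i * (M i j * x j) ≤ |x i * (M i j * x j)| := le_abs_self _
    _ = |x i| * (M i j * |x j|) := by rw [abs_mul, abs_mul, abs_of_nonneg (hM i j)]

namespace IsHermitian

variable [DecidableEq n]

lemma dotProduct_mulVec_le_sSup_spectrum_mul (hM : M.IsHermitian) (x : n → ℝ) :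
    x ⬝ᵥ M *ᵥ x ≤ sSup (spectrum ℝ M) * (x ⬝ᵥ x) := by
  have hpsd : (algebraMap ℝ _ (sSup (spectrum ℝ M)) - M).PosSemidef := by
    refine posSemidef_iff_isHermitian_and_spectrum_nonneg.mpr
      ⟨(isHermitian_diagonal _).sub hM, ?_⟩
    rw [← spectrum.singleton_sub_eq]
    rintro _ ⟨_, rfl, μ, hμ, rfl⟩
    exact sub_nonneg.mpr (le_csSup M.finite_real_spectrum.bddAbove hμ)
  have := hpsd.dotProduct_mulVec_nonneg x
  rw [star_trivial, sub_mulVec, dotProduct_sub, Algebra.algebraMap_eq_smul_one, smul_mulVec,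
    one_mulVec, dotProduct_smul, smul_eq_mul] at this
  linarith

lemma exists_mulVec_eq_sSup_spectrum_smul [Nonempty n] (hM : M.IsHermitian) :
    ∃ x : n → ℝ, x ≠ 0 ∧ M *ᵥ x = sSup (spectrum ℝ M) • x := by
  obtain ⟨i, hi⟩ : sSup (spectrum ℝ M) ∈ Set.range hM.eigenvalues := by
    rw [← hM.spectrum_real_eq_range_eigenvalues]
    refine Set.Nonempty.csSup_mem ?_ M.finite_real_spectrum
    rw [hM.spectrum_real_eq_range_eigenvalues]
    exact Set.range_nonempty _
  exact ⟨_, (WithLp.ofLp_eq_zero 2).ne.2 (hM.eigenvectorBasis.orthonormal.ne_zero i),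
    hi ▸ hM.mulVec_eigenvectorBasis i⟩

lemma exists_nonneg_sSup_spectrum_mul_le [Nonempty n] (hM : M.IsHermitian)
    (hM₀ : ∀ i j, 0 ≤ M i j) :
    ∃ x : n → ℝ, 0 ≤ x ∧ x ≠ 0 ∧ sSup (spectrum ℝ M) * (x ⬝ᵥ x) ≤ x ⬝ᵥ M *ᵥ x := by
  obtain ⟨x, hx₀, hx⟩ := hM.exists_mulVec_eq_sSup_spectrum_smul
  refine ⟨|x|, abs_nonneg x, by simpa using hx₀, ?_⟩
  have habs : |x| ⬝ᵥ |x| = x ⬝ᵥ x := by simp [dotProduct, abs_mul_abs_self]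
  calc sSup (spectrum ℝ M) * (|x| ⬝ᵥ |x|) = x ⬝ᵥ M *ᵥ x := by
        rw [habs, hx, dotProduct_smul, smul_eq_mul]
    _ ≤ |x| ⬝ᵥ M *ᵥ |x| := dotProduct_mulVec_le_abs hM₀ x

end IsHermitian

end Matrix

section SignlessLaplacian

variable {V : Type*} [Fintype V] [DecidableEq V] (G : SimpleGraph V)

omit [DecidableEq V] in
lemma gdeg_eq_degree (v : V) : gdeg G v = G.degree v := by
  rw [gdeg, ← card_neighborSet_eq_degree, Set.ncard_eq_toFinset_card', Set.toFinset_card]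

lemma signlessLap_eq : signlessLap G = G.degMatrix ℝ + G.adjMatrix ℝ := by
  ext i j
  simp [signlessLap, degMatrix, diagonal_apply, gdeg_eq_degree]

lemma isHermitian_signlessLap : (signlessLap G).IsHermitian := by
  rw [signlessLap_eq]
  exact (G.isHermitian_degMatrix ℝ).add (G.isHermitian_adjMatrix ℝ)

lemma signlessLap_nonneg (i j : V) : 0 ≤ signlessLap G i j := by
  simp only [signlessLap, of_apply]
  positivity

lemma dotProduct_signlessLap_mulVec (x : V → ℝ) :
    x ⬝ᵥ signlessLap G *ᵥ x =
      (∑ p : V × V, if G.Adj p.1 p.2 then (x p.1 + x p.2) ^ 2 else 0) / 2 := by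
  simp_rw [signlessLap_eq, add_mulVec, dotProduct_add, dotProduct_mulVec_degMatrix,
    dotProduct_mulVec_adjMatrix, ← Finset.sum_add_distrib, degree_eq_sum_if_adj, Finset.sum_mul,
    ite_mul, one_mul, zero_mul, ← Finset.sum_add_distrib, ite_add_ite, add_zero,
    Fintype.sum_prod_type]
  have hswap : (∑ i, ∑ j, if G.Adj i j then x j * x j + x j * x i else 0) =
      ∑ i, ∑ j, if G.Adj i j then x i * x i + x i * x j else 0 := by
    rw [Finset.sum_comm]
    simp_rw [G.adj_comm]
  rw [eq_div_iff two_ne_zero, mul_two]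
  nth_rewrite 2 [← hswap]
  simp_rw [← Finset.sum_add_distrib, ite_add_ite, add_zero]
  congr! 3 with i _ j _
  ring

lemma dotProduct_signlessLap_mulVec_comp_iso {W : Type*} [Fintype W] [DecidableEq W]
    {H : SimpleGraph V} {H' : SimpleGraph W} (e : H ≃g H') (x : W → ℝ) :
    (x ∘ e) ⬝ᵥ signlessLap H *ᵥ (x ∘ e) = x ⬝ᵥ signlessLap H' *ᵥ x := by
  rw [dotProduct_signlessLap_mulVec, dotProduct_signlessLap_mulVec]
  congr 1
  exact Fintype.sum_equiv (e.toEquiv.prodCongr e.toEquiv) _ _ fun p => by simp [e.map_adj_iff]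

end SignlessLaplacian

section Kelmans

variable {V : Type*} (G : SimpleGraph V) (u v : V)

/-- The set `N(v) \ N[u]` of neighbours of `v` that the Kelmans transformation hands over to `u`. -/
def kelmansMoved : Set V := G.neighborSet v \ insert u (G.neighborSet u)

lemma swap_mem_kelmansMoved_iff {w : V} :
    Equiv.swap u v w ∈ kelmansMoved G u v ↔ w ∈ kelmansMoved G u v := by
  have hu : u ∉ kelmansMoved G u v := fun h => h.2 (Set.mem_insert u _)
  have hv : v ∉ kelmansMoved G u v := fun h => G.irrefl h.1
  rcases eq_or_ne w u with rfl | hwu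
  · simp [hu, hv]
  rcases eq_or_ne w v with rfl | hwv
  · simp [hu, hv]
  rw [Equiv.swap_apply_of_ne_of_ne hwu hwv]

/-- `kelmans G u v` is the pullback of `G` along this involution of ordered pairs
(`kelmans_adj_iff`), so the two quadratic forms can be compared term by term. -/
def kelmansPairSwap (p : V × V) : V × V :=
  (if p.2 ∈ kelmansMoved G u v then Equiv.swap u v p.1 else p.1,
    if p.1 ∈ kelmansMoved G u v then Equiv.swap u v p.2 else p.2)

lemma kelmansPairSwap_involutive : Function.Involutive (kelmansPairSwap G u v) := by
  rintro ⟨a, b⟩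
  by_cases ha : a ∈ kelmansMoved G u v <;> by_cases hb : b ∈ kelmansMoved G u v <;>
    simp [kelmansPairSwap, ha, hb, swap_mem_kelmansMoved_iff]

lemma kelmans_adj_iff (a b : V) :
    (kelmans G u v).Adj a b ↔
      G.Adj (kelmansPairSwap G u v (a, b)).1 (kelmansPairSwap G u v (a, b)).2 := by
  have := G.adj_comm
  have : ∀ w, ¬G.Adj w w := fun _ => G.irrefl
  simp only [kelmans, kelmansPairSwap, kelmansMoved, fromRel_adj, Set.mem_sdiff, mem_neighborSet,
    Set.mem_insert_iff, Equiv.swap_apply_def]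
  split_ifs <;> subst_vars <;> grind

lemma le_kelmansPairSwap_fst {x : V → ℝ} (huv : x v ≤ x u) {a b : V} (hab : G.Adj a b) :
    x a ≤ x (kelmansPairSwap G u v (a, b)).1 := by
  simp only [kelmansPairSwap]
  split_ifs with hb
  · rcases eq_or_ne a u with rfl | hau
    · exact absurd hab fun h => hb.2 (Or.inr h)
    rcases eq_or_ne a v with rfl | hav
    · simpa using huv
    rw [Equiv.swap_apply_of_ne_of_ne hau hav]
  · rfl

def kelmansSwapIso : kelmans G u v ≃g kelmans G v u where
  toEquiv := Equiv.swap u v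
  map_rel_iff' {a b} := by
    have := G.adj_comm
    have : ∀ w, ¬G.Adj w w := fun _ => G.irrefl
    simp only [kelmans, fromRel_adj, Set.mem_sdiff, mem_neighborSet, Set.mem_insert_iff,
      Equiv.swap_apply_def]
    split_ifs <;> subst_vars <;> grind

lemma dotProduct_signlessLap_mulVec_le_kelmans [Fintype V] [DecidableEq V] {x : V → ℝ}
    (hx : 0 ≤ x) (huv : x v ≤ x u) :
    x ⬝ᵥ signlessLap G *ᵥ x ≤ x ⬝ᵥ signlessLap (kelmans G u v) *ᵥ x := by
  set ψ := kelmansPairSwap G u v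
  rw [dotProduct_signlessLap_mulVec, dotProduct_signlessLap_mulVec]
  gcongr 1
  calc (∑ p : V × V, if G.Adj p.1 p.2 then (x p.1 + x p.2) ^ 2 else 0)
      ≤ ∑ p : V × V, if G.Adj p.1 p.2 then (x (ψ p).1 + x (ψ p).2) ^ 2 else 0 := by
        refine Finset.sum_le_sum fun ⟨a, b⟩ _ => ?_
        split_ifs with hab
        · have := add_nonneg (hx a) (hx b)
          gcongr
          exacts [le_kelmansPairSwap_fst G u v huv hab, le_kelmansPairSwap_fst G u v huv hab.symm]
        · rfl
    _ = ∑ p : V × V, if G.Adj (ψ p).1 (ψ p).2 then (x p.1 + x p.2) ^ 2 else 0 := by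
        conv_rhs => rw [← Equiv.sum_comp (kelmansPairSwap_involutive G u v).toPerm]
        simp only [Function.Involutive.coe_toPerm, ψ, kelmansPairSwap_involutive G u v _]
    _ = ∑ p : V × V, if (kelmans G u v).Adj p.1 p.2 then (x p.1 + x p.2) ^ 2 else 0 := by
        simp_rw [kelmans_adj_iff]
        rfl

end Kelmans

/-- **Lemma 2.3.** The signless Laplacian spectral radius does not decrease under a
Kelmans transformation: `q(G) ≤ q(G*)`. -/
theorem qrad_le_qrad_kelmans {V : Type*} [Fintype V] [DecidableEq V]
    (G : SimpleGraph V) (u v : V) :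
    qrad G ≤ qrad (kelmans G u v) := by
  rcases isEmpty_or_nonempty V with hV | hV
  · rw [qrad, qrad, Subsingleton.elim (signlessLap G) (signlessLap (kelmans G u v))]
  obtain ⟨x, hx₀, hx, hqx⟩ :=
    (isHermitian_signlessLap G).exists_nonneg_sSup_spectrum_mul_le (signlessLap_nonneg G)
  suffices ∃ y : V → ℝ, y ⬝ᵥ y = x ⬝ᵥ x ∧
      x ⬝ᵥ signlessLap G *ᵥ x ≤ y ⬝ᵥ signlessLap (kelmans G u v) *ᵥ y by
    obtain ⟨y, hyy, hxy⟩ := this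
    have hqy := (isHermitian_signlessLap (kelmans G u v)).dotProduct_mulVec_le_sSup_spectrum_mul y
    rw [hyy] at hqy
    exact le_of_mul_le_mul_right (hqx.trans (hxy.trans hqy))
      (by simpa using dotProduct_self_star_pos_iff.mpr hx)
  rcases le_total (x v) (x u) with hvu | huv
  · exact ⟨x, rfl, dotProduct_signlessLap_mulVec_le_kelmans G u v hx₀ hvu⟩
  · refine ⟨x ∘ kelmansSwapIso G u v, comp_equiv_dotProduct_comp_equiv _ _ _, ?_⟩
    rw [dotProduct_signlessLap_mulVec_comp_iso]
    exact dotProduct_signlessLap_mulVec_le_kelmans G v u hx₀ huv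

end
end

section
/- Let k ≥ 2, s with 3 ≤ s ≤ k−1, and let H be a (k−s)-regular graph on k−1 vertices. Then the graph G = K_s ∨ (K_{n−k−s+1} + H), for n sufficiently large (n ≥ 11k), is Hamilton-connected. -/
open Classical SimpleGraph

noncomputable section

/-- The join `G ∨ H` of two graphs: disjoint union plus all edges between the parts. -/
noncomputable def graphJoin {α β : Type*} (G : SimpleGraph α) (H : SimpleGraph β) :
    SimpleGraph (α ⊕ β) :=
  (G ⊕g H) ⊔ SimpleGraph.fromRel (fun x y => x.isLeft ∧ y.isRight)

/-!
The `s` vertices of `K_s` are adjacent to everything, so a Hamiltonian `u`–`v` path of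
`K_s ∨ F` can be threaded out of any cover of `F` by `s + 1` vertex-disjoint (possibly empty)
paths `P, M₁, …, M_{s-1}, Q`, where `P` starts at `u` and `Q` ends at `v` whenever these lie in
`F`: alternate the paths with the vertices of `K_s`. Path covers of a disjoint union are unions of
path covers, `K_m` needs a single path besides the prescribed ends, and `H` needs only `s - 2`.
Indeed every vertex of `H` has exactly `s - 2` non-neighbours, so a path grown greedily from a
prescribed start until it gets stuck misses at most `s - 2` vertices, all non-neighbours of its
end; without prescribed ends, an exchange argument saves one more path.
-/

theorem List.Nodup.head_ne_getLast {α : Type*} {l : List α} (h : l.Nodup) (hne : l ≠ [])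
    (hl : 2 ≤ l.length) : l.head hne ≠ l.getLast hne := by
  rw [head_eq_getElem, getLast_eq_getElem, Ne, h.getElem_inj_iff]
  omega

theorem Option.nodup_toList_append_toList {α : Type*} {x y : Option α} (hxy : ∀ a ∈ x, a ∉ y) :
    (x.toList ++ y.toList).Nodup := by
  cases x <;> cases y <;> simp_all [eq_comm]

namespace SimpleGraph

open List

variable {V : Type*}

theorem exists_isHamiltonian_of_isChain {G : SimpleGraph V} {l : List V} {u v : V}
    (hc : l.IsChain G.Adj) (hnd : l.Nodup) (hmem : ∀ x, x ∈ l)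
    (hu : l.head? = some u) (hv : l.getLast? = some v) :
    ∃ p : G.Walk u v, p.IsHamiltonian := by
  have hne : l ≠ [] := by rintro rfl; simp at hu
  obtain rfl : l.head hne = u := by simpa [head?_eq_some_head hne] using hu
  obtain rfl : l.getLast hne = v := by simpa [getLast?_eq_some_getLast hne] using hv
  exact ⟨Walk.ofSupport l hne hc, fun x => by
    rw [Walk.support_ofSupport]; exact count_eq_one_of_mem hnd (hmem x)⟩

theorem isChain_adj_of_nodup {G : SimpleGraph V} :
    ∀ {l : List V}, l.Nodup → l.IsChain (fun x y => x ≠ y → G.Adj x y) → l.IsChain G.Adj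
  | [], _, _ => .nil
  | [_], _, _ => .singleton _
  | a :: b :: l, hnd, hc => by
    rw [isChain_cons_cons] at hc ⊢
    exact ⟨hc.1 fun h => by simp_all, isChain_adj_of_nodup hnd.of_cons hc.2⟩

/-- The paths in `Ps` may be empty. -/
structure IsPathCover (G : SimpleGraph V) (Ps : List (List V)) : Prop where
  isChain : ∀ P ∈ Ps, P.IsChain G.Adj
  nodup : Ps.flatten.Nodup
  mem_flatten : ∀ x, x ∈ Ps.flatten

/-- An end `none` forces the corresponding path to be empty. -/
def HasPathCoverFromTo (G : SimpleGraph V) (x y : Option V) (t : ℕ) : Prop :=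
  ∃ P Q Ms, G.IsPathCover (P :: Q :: Ms) ∧ P.head? = x ∧ Q.getLast? = y ∧ Ms.length = t

def HasPathCovers (G : SimpleGraph V) (t : ℕ) : Prop :=
  ∀ x y : Option V, (∀ a ∈ x, a ∉ y) → G.HasPathCoverFromTo x y t

theorem IsPathCover.of_perm {G : SimpleGraph V} {Ps Qs : List (List V)} (h : G.IsPathCover Ps)
    (hQs : ∀ Q ∈ Qs, Q.IsChain G.Adj) (hperm : Qs.flatten ~ Ps.flatten) : G.IsPathCover Qs :=
  ⟨hQs, hperm.nodup_iff.2 h.nodup, fun x => hperm.mem_iff.2 (h.mem_flatten x)⟩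

theorem HasPathCoverFromTo.of_length_le {G : SimpleGraph V} {x y : Option V} {t : ℕ}
    {P Q : List V} {Ms : List (List V)} (h : G.IsPathCover (P :: Q :: Ms)) (hP : P.head? = x)
    (hQ : Q.getLast? = y) (ht : Ms.length ≤ t) : G.HasPathCoverFromTo x y t := by
  refine ⟨P, Q, Ms ++ replicate (t - Ms.length) [], h.of_perm ?_ (by simp), hP, hQ,
    by simp; omega⟩
  simp only [mem_cons, mem_append, mem_replicate]
  rintro R (rfl | rfl | hR | ⟨-, rfl⟩)
  exacts [h.isChain _ (by simp), h.isChain _ (by simp), h.isChain _ (by simp [hR]), .nil]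

theorem HasPathCoverFromTo.symm {G : SimpleGraph V} {x y : Option V} {t : ℕ}
    (h : G.HasPathCoverFromTo x y t) : G.HasPathCoverFromTo y x t := by
  obtain ⟨P, Q, Ms, hc, hP, hQ, ht⟩ := h
  refine ⟨Q.reverse, P.reverse, Ms, hc.of_perm ?_ ?_, by simpa, by simpa, ht⟩
  · simp only [mem_cons]
    rintro R (rfl | rfl | hR)
    · exact isChain_reverse.2 ((hc.isChain Q (by simp)).imp fun _ _ h => h.symm)
    · exact isChain_reverse.2 ((hc.isChain P (by simp)).imp fun _ _ h => h.symm)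
    · exact hc.isChain R (by simp [hR])
  · rw [← Multiset.coe_eq_coe]
    simp only [flatten_cons, ← Multiset.coe_add, Multiset.coe_reverse]
    abel

section Unvisited

variable [Fintype V]

def unvisited (Ps : List (List V)) : List V :=
  (Finset.univ.filter (· ∉ Ps.flatten)).toList

@[simp]
theorem mem_unvisited {Ps : List (List V)} {x : V} : x ∈ unvisited Ps ↔ x ∉ Ps.flatten := by
  simp [unvisited]

theorem nodup_unvisited (Ps : List (List V)) : (unvisited Ps).Nodup :=
  Finset.nodup_toList _

theorem length_unvisited {Ps : List (List V)} (h : Ps.flatten.Nodup) :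
    (unvisited Ps).length = Fintype.card V - Ps.flatten.length := by
  have : Finset.univ.filter (· ∈ Ps.flatten) = Ps.flatten.toFinset := by ext; simp
  rw [unvisited, Finset.length_toList, Finset.filter_not, this, Finset.card_univ_sdiff,
    toFinset_card_of_nodup h]

theorem nodup_flatten_append_unvisited {Ps : List (List V)} (h : Ps.flatten.Nodup) :
    (Ps.flatten ++ unvisited Ps).Nodup :=
  nodup_append.2 ⟨h, nodup_unvisited Ps, fun _ hx _ hy => by rintro rfl; simp_all⟩

theorem isPathCover_append_singletons {G : SimpleGraph V} {Ps : List (List V)}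
    (hc : ∀ P ∈ Ps, P.IsChain G.Adj) (h : Ps.flatten.Nodup) :
    G.IsPathCover (Ps ++ (unvisited Ps).map ([·])) := by
  refine ⟨?_, ?_, fun x => ?_⟩
  · simp only [mem_append, mem_map]
    rintro P (hP | ⟨x, -, rfl⟩)
    exacts [hc P hP, .singleton x]
  · simpa [flatten_append, ← flatMap_def] using nodup_flatten_append_unvisited h
  · by_cases hx : x ∈ Ps.flatten <;> simp [flatten_append, ← flatMap_def, hx]

theorem exists_isPathCover_length_le {G : SimpleGraph V} {d : ℕ} {Ps : List (List V)}
    (hc : ∀ P ∈ Ps, P.IsChain G.Adj) (hnd : Ps.flatten.Nodup)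
    (hlen : Ps.length + Fintype.card V ≤ d + Ps.flatten.length) :
    ∃ Ms, G.IsPathCover Ms ∧ Ms.length ≤ d := by
  refine ⟨_, isPathCover_append_singletons hc hnd, ?_⟩
  have := hnd.length_le_card
  simp only [length_append, length_map, length_unvisited hnd]
  omega

theorem isPathCover_top_append_unvisited {Ps : List (List V)}
    (hc : ∀ P ∈ Ps, P.IsChain (⊤ : SimpleGraph V).Adj) (h : Ps.flatten.Nodup) :
    (⊤ : SimpleGraph V).IsPathCover (Ps ++ [unvisited Ps]) := by
  refine ⟨?_, ?_, fun x => ?_⟩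
  · simp only [mem_append, mem_singleton]
    rintro P (hP | rfl)
    exacts [hc P hP, (nodup_unvisited Ps).isChain.imp fun _ _ h => h]
  · simpa using nodup_flatten_append_unvisited h
  · by_cases hx : x ∈ Ps.flatten <;> simp [hx]

theorem hasPathCovers_top : (⊤ : SimpleGraph V).HasPathCovers 1 := by
  intro x y hxy
  refine ⟨x.toList, y.toList, _, isPathCover_top_append_unvisited (Ps := [x.toList, y.toList])
    ?_ (by simpa using Option.nodup_toList_append_toList hxy), by cases x <;> rfl,
    by cases y <;> rfl, rfl⟩
  simp only [mem_cons, not_mem_nil, or_false]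
  rintro P (rfl | rfl)
  · cases x <;> simp
  · cases y <;> simp

theorem exists_nodup_forall_mem_head?_getLast? {x y : Option V} (hxy : ∀ a ∈ x, a ∉ y) :
    ∃ l : List V, l.Nodup ∧ (∀ a, a ∈ l) ∧ (∀ a ∈ x, l.head? = some a) ∧
      ∀ b ∈ y, l.getLast? = some b := by
  have hnd : [x.toList, y.toList].flatten.Nodup := by
    simpa using Option.nodup_toList_append_toList hxy
  have hperm : x.toList ++ unvisited [x.toList, y.toList] ++ y.toList ~
      [x.toList, y.toList].flatten ++ unvisited [x.toList, y.toList] := by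
    simpa using perm_append_comm.append_left x.toList
  refine ⟨_, hperm.nodup_iff.2 (nodup_flatten_append_unvisited hnd), fun a => hperm.mem_iff.2 ?_,
    by cases x <;> simp, by cases y <;> simp⟩
  by_cases ha : a ∈ [x.toList, y.toList].flatten <;> simp_all

end Unvisited

section MaximalPath

theorem exists_isChain_maximal (G : SimpleGraph V) (T : Finset V) {w : V} (hw : w ∈ T) :
    ∃ l : List V, l.head? = some w ∧ l.IsChain G.Adj ∧ l.Nodup ∧ (∀ x ∈ l, x ∈ T) ∧
      ∀ e ∈ l.getLast?, ∀ x ∈ T, x ∉ l → ¬ G.Adj e x := by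
  induction T using Finset.strongInduction generalizing w with
  | H T ih =>
  by_cases hext : ∃ x ∈ T.erase w, G.Adj w x
  · obtain ⟨x, hxT, hwx⟩ := hext
    obtain ⟨l, hl, hc, hnd, hT, hmax⟩ := ih (T.erase w) (Finset.erase_ssubset hw) hxT
    have hwl : w ∉ l := fun h => by simpa using hT w h
    have hne : l ≠ [] := by rintro rfl; simp at hl
    refine ⟨w :: l, rfl, hc.cons (by simpa [hl]), nodup_cons.2 ⟨hwl, hnd⟩, ?_, ?_⟩
    · simpa [hw] using fun x hx => Finset.mem_of_mem_erase (hT x hx)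
    · intro e he z hz hzl
      rw [getLast?_cons_of_ne_nil hne] at he
      exact hmax e he z (Finset.mem_erase.2 ⟨by rintro rfl; simp at hzl, hz⟩) (by simp_all)
  · refine ⟨[w], rfl, .singleton _, nodup_singleton _, by simpa, ?_⟩
    simp only [getLast?_singleton, Option.mem_def, Option.some.injEq, mem_singleton]
    rintro _ rfl z hz hzw hwz
    exact hext ⟨z, Finset.mem_erase.2 ⟨hzw, hz⟩, hwz⟩

variable [Fintype V] [DecidableEq V] {G : SimpleGraph V} [DecidableRel G.Adj] {d : ℕ}

theorem length_unvisited_le_degree_compl {Ps : List (List V)} {e : V}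
    (he : e ∈ Ps.flatten) (hmax : ∀ x, x ∉ Ps.flatten → ¬ G.Adj e x) :
    (unvisited Ps).length ≤ Gᶜ.degree e := by
  rw [← toFinset_card_of_nodup (nodup_unvisited Ps), ← card_neighborFinset_eq_degree]
  refine Finset.card_le_card fun x hx => ?_
  have hx : x ∉ Ps.flatten := by simpa using hx
  simpa [compl_adj] using ⟨fun h => hx (h ▸ he), hmax x hx⟩

theorem hasPathCoverFromTo_some_of_degree_compl_le (hG : ∀ v, Gᶜ.degree v ≤ d) {w : V}
    {y : Option V} (hwy : w ∉ y) : G.HasPathCoverFromTo (some w) y d := by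
  obtain ⟨l, hl, hc, hnd, hT, hmax⟩ :=
    exists_isChain_maximal G (Finset.univ.filter (· ∉ y)) (w := w) (by simpa using hwy)
  have hnd' : [l, y.toList].flatten.Nodup := by
    cases y <;> simp_all [nodup_append, eq_comm]
  have hne : l ≠ [] := by rintro rfl; simp at hl
  have he := getLast?_eq_some_getLast hne
  refine .of_length_le (isPathCover_append_singletons (Ps := [l, y.toList]) ?_ hnd') hl
    (by cases y <;> rfl) ?_
  · simp only [mem_cons, not_mem_nil, or_false]
    rintro P (rfl | rfl)
    · exact hc
    · cases y <;> simp
  · simp only [append_eq, nil_append, length_map]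
    refine (length_unvisited_le_degree_compl (e := l.getLast hne) ?_ ?_).trans (hG _)
    · simp [mem_of_getLast? he]
    · intro x hx
      have hx : x ∉ l ∧ x ∉ y := by cases y <;> simp_all [eq_comm]
      exact hmax _ he x (by simpa using hx.2) hx.1

/-- Otherwise `r` would have the `d + 1` non-neighbours `w`, `e` and `unvisited [l] \ {r}`. -/
theorem adj_or_exists_adj_of_mem_unvisited (hG : ∀ v, Gᶜ.degree v ≤ d) {l : List V}
    {w e r : V} (hw : w ∈ l) (he : e ∈ l) (hwe : w ≠ e) (hmax : ∀ x ∉ l, ¬ G.Adj e x)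
    (hlen : (unvisited [l]).length = d) (hr : r ∈ unvisited [l]) :
    G.Adj r w ∨ ∃ r' ∈ unvisited [l], G.Adj r r' := by
  by_contra! h
  have hrl : r ∉ l := by simpa using hr
  have hsub : insert w (insert e ((unvisited [l]).toFinset.erase r)) ⊆ Gᶜ.neighborFinset r := by
    intro x hx
    simp only [Finset.mem_insert, Finset.mem_erase, mem_toFinset] at hx
    rw [mem_neighborFinset, compl_adj]
    rcases hx with rfl | rfl | ⟨hxr, hx⟩
    · exact ⟨fun h => hrl (h ▸ hw), h.1⟩
    · exact ⟨fun h => hrl (h ▸ he), fun h => hmax r hrl h.symm⟩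
    · exact ⟨Ne.symm hxr, h.2 x hx⟩
  have := (Finset.card_le_card hsub).trans_eq (card_neighborFinset_eq_degree _ _)
  rw [Finset.card_insert_of_notMem (by simp [hwe, hw]),
    Finset.card_insert_of_notMem (by simp [he]), Finset.card_erase_of_mem (mem_toFinset.2 hr),
    toFinset_card_of_nodup (nodup_unvisited _)] at this
  have := hG r
  omega

/-- A greedy path that gets stuck leaves at most `d` vertices; if exactly `d`, an edge from one of
them to its start, or between two of them, saves a path. -/
theorem exists_isPathCover_length_le_of_degree_compl_le (hd : 1 ≤ d)
    (hdV : d + 2 ≤ Fintype.card V) (hG : ∀ v, Gᶜ.degree v ≤ d) :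
    ∃ Ms, G.IsPathCover Ms ∧ Ms.length ≤ d := by
  obtain ⟨w⟩ : Nonempty V := Fintype.card_pos_iff.1 (by omega)
  obtain ⟨l, hl, hc, hnd, -, hmax⟩ := exists_isChain_maximal G Finset.univ (Finset.mem_univ w)
  have hne : l ≠ [] := by rintro rfl; simp at hl
  have he := getLast?_eq_some_getLast hne
  have hmax' : ∀ x ∉ l, ¬ G.Adj (l.getLast hne) x := fun x hx =>
    hmax _ he x (Finset.mem_univ x) hx
  have hlen : (unvisited [l]).length + l.length = Fintype.card V := by
    have := length_unvisited (Ps := [l]) (by simpa using hnd)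
    have := hnd.length_le_card
    simp only [flatten_cons, flatten_nil, append_nil] at *
    omega
  have hle : (unvisited [l]).length ≤ d :=
    (length_unvisited_le_degree_compl (e := l.getLast hne) (by simp [getLast_mem])
      (by simpa using hmax')).trans (hG _)
  rcases hle.lt_or_eq with hlt | heq
  · exact exists_isPathCover_length_le (Ps := [l]) (by simpa using hc) (by simpa using hnd)
      (by simp only [length_cons, length_nil, flatten_cons, flatten_nil, append_nil]; omega)
  have hwe : w ≠ l.getLast hne := by
    obtain rfl : l.head hne = w := by simpa [head?_eq_some_head hne] using hl
    exact hnd.head_ne_getLast hne (by omega)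
  obtain ⟨r, hr⟩ : ∃ r, r ∈ unvisited [l] := exists_mem_of_length_pos (by omega)
  have hrl : r ∉ l := by simpa using hr
  rcases adj_or_exists_adj_of_mem_unvisited hG (mem_of_mem_head? hl) (getLast_mem hne) hwe hmax'
    heq hr with hrw | ⟨r', hr', hrr'⟩
  · refine exists_isPathCover_length_le (Ps := [r :: l]) ?_ (by simpa [hrl] using hnd)
      (by simp only [flatten_cons, flatten_nil, append_nil, length_cons, length_nil]; omega)
    simpa using hc.cons (by simpa [hl])
  · refine exists_isPathCover_length_le (Ps := [l, [r, r']]) (by simpa [hc] using hrr') ?_ (by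
      simp only [length_cons, length_nil, flatten_cons, flatten_nil, append_nil, length_append]
      omega)
    have hr'l : r' ∉ l := by simpa using hr'
    simp only [flatten_cons, flatten_nil, append_nil]
    refine nodup_append.2 ⟨hnd, by simpa using hrr'.ne, ?_⟩
    rintro x hx y hy rfl
    simp only [mem_cons, not_mem_nil, or_false] at hy
    rcases hy with rfl | rfl <;> contradiction

theorem hasPathCovers_of_degree_compl_le (hd : 1 ≤ d) (hdV : d + 2 ≤ Fintype.card V)
    (hG : ∀ v, Gᶜ.degree v ≤ d) : G.HasPathCovers d
  | some w, y, hxy => hasPathCoverFromTo_some_of_degree_compl_le hG (hxy w rfl)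
  | none, some w, _ => (hasPathCoverFromTo_some_of_degree_compl_le hG (by simp)).symm
  | none, none, _ => by
    obtain ⟨Ms, hMs, hlen⟩ := exists_isPathCover_length_le_of_degree_compl_le hd hdV hG
    exact .of_length_le (P := []) (Q := []) (hMs.of_perm (by simpa using hMs.isChain) (by simp))
      rfl rfl hlen

end MaximalPath

section Sum

variable {α β : Type*} {G₁ : SimpleGraph α} {G₂ : SimpleGraph β}

theorem isChain_map_inl_append_map_inr {P₁ : List α} {P₂ : List β} (h₁ : P₁.IsChain G₁.Adj)
    (h₂ : P₂.IsChain G₂.Adj) (h : P₁ = [] ∨ P₂ = []) :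
    (P₁.map Sum.inl ++ P₂.map Sum.inr).IsChain (G₁ ⊕g G₂).Adj := by
  rcases h with rfl | rfl
  · simpa [isChain_map] using h₂
  · simpa [isChain_map] using h₁

theorem HasPathCoverFromTo.sum {x y : Option (α ⊕ β)} {t₁ t₂ : ℕ}
    (h₁ : G₁.HasPathCoverFromTo (x.bind Sum.getLeft?) (y.bind Sum.getLeft?) t₁)
    (h₂ : G₂.HasPathCoverFromTo (x.bind Sum.getRight?) (y.bind Sum.getRight?) t₂) :
    (G₁ ⊕g G₂).HasPathCoverFromTo x y (t₁ + t₂) := by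
  obtain ⟨P₁, Q₁, M₁, hc₁, hP₁, hQ₁, rfl⟩ := h₁
  obtain ⟨P₂, Q₂, M₂, hc₂, hP₂, hQ₂, rfl⟩ := h₂
  have hP : P₁ = [] ∨ P₂ = [] := by rcases x with _ | _ | _ <;> simp_all
  have hQ : Q₁ = [] ∨ Q₂ = [] := by rcases y with _ | _ | _ <;> simp_all
  have hperm : ((P₁.map Sum.inl ++ P₂.map Sum.inr) :: (Q₁.map Sum.inl ++ Q₂.map Sum.inr) ::
      (M₁.map (map Sum.inl) ++ M₂.map (map Sum.inr))).flatten ~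
      (P₁ :: Q₁ :: M₁).flatten.map Sum.inl ++ (P₂ :: Q₂ :: M₂).flatten.map Sum.inr := by
    simp only [flatten_cons, flatten_append, map_append, map_flatten]
    rw [← Multiset.coe_eq_coe]
    simp only [← Multiset.coe_add]
    abel
  refine ⟨P₁.map Sum.inl ++ P₂.map Sum.inr, Q₁.map Sum.inl ++ Q₂.map Sum.inr,
    M₁.map (map Sum.inl) ++ M₂.map (map Sum.inr), ⟨?_, ?_, ?_⟩, ?_, ?_, by simp⟩
  · simp only [mem_cons, mem_append, mem_map]
    rintro R (rfl | rfl | ⟨M, hM, rfl⟩ | ⟨M, hM, rfl⟩)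
    · exact isChain_map_inl_append_map_inr (hc₁.isChain _ (by simp)) (hc₂.isChain _ (by simp)) hP
    · exact isChain_map_inl_append_map_inr (hc₁.isChain _ (by simp)) (hc₂.isChain _ (by simp)) hQ
    · exact (isChain_map _).2 ((hc₁.isChain M (by simp [hM])).imp fun _ _ h => h)
    · exact (isChain_map _).2 ((hc₂.isChain M (by simp [hM])).imp fun _ _ h => h)
  · rw [hperm.nodup_iff, nodup_append]
    exact ⟨hc₁.nodup.map Sum.inl_injective, hc₂.nodup.map Sum.inr_injective, by simp⟩
  · intro z
    rw [hperm.mem_iff]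
    rcases z with a | b
    · simpa using hc₁.mem_flatten a
    · simpa using hc₂.mem_flatten b
  · rcases x with _ | _ | _ <;> simp_all
  · rcases y with _ | _ | _ <;> simp_all

theorem HasPathCovers.sum {t₁ t₂ : ℕ} (h₁ : G₁.HasPathCovers t₁) (h₂ : G₂.HasPathCovers t₂) :
    (G₁ ⊕g G₂).HasPathCovers (t₁ + t₂) := fun x y hxy =>
  .sum (h₁ _ _ fun a ha hb => hxy (.inl a) (by simpa [Option.bind_eq_some_iff] using ha)
      (by simpa [Option.bind_eq_some_iff] using hb))
    (h₂ _ _ fun b ha hb => hxy (.inr b) (by simpa [Option.bind_eq_some_iff] using ha)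
      (by simpa [Option.bind_eq_some_iff] using hb))

end Sum

section Join

variable {α β : Type*}

def weave : List α → List (List β) → List (α ⊕ β)
  | a :: as, N :: Ns => Sum.inl a :: (N.map Sum.inr ++ weave as Ns)
  | _, _ => []

theorem weave_append {as as' : List α} {Ns Ns' : List (List β)} (h : as.length = Ns.length) :
    weave (as ++ as') (Ns ++ Ns') = weave as Ns ++ weave as' Ns' := by
  induction as generalizing Ns with
  | nil => cases Ns <;> simp_all [weave]
  | cons a as ih =>
    cases Ns with
    | nil => simp at h
    | cons N Ns => simp [weave, ih (Nat.succ.inj h)]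

theorem head?_weave {as : List α} {Ns : List (List β)} (h : as.length = Ns.length) :
    (weave as Ns).head? = as.head?.map Sum.inl := by
  cases as <;> cases Ns <;> simp_all [weave]

theorem perm_weave {as : List α} {Ns : List (List β)} (h : as.length = Ns.length) :
    weave as Ns ~ as.map Sum.inl ++ Ns.flatten.map Sum.inr := by
  induction as generalizing Ns with
  | nil => cases Ns <;> simp_all [weave]
  | cons a as ih =>
    cases Ns with
    | nil => simp at h
    | cons N Ns =>
      simp only [weave, map_cons, flatten_cons, map_append, cons_append, perm_cons]
      exact ((ih (Nat.succ.inj h)).append_left _).trans (perm_append_comm_assoc _ _ _)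

theorem graphJoin_top_adj_inl (F : SimpleGraph β) {a : α} {y : α ⊕ β} (h : Sum.inl a ≠ y) :
    (graphJoin ⊤ F).Adj (Sum.inl a) y := by
  rcases y with b | b
  · exact Or.inl (by simpa using h)
  · exact Or.inr (by simp)

theorem isChain_map_inr_graphJoin (G : SimpleGraph α) {F : SimpleGraph β} {P : List β}
    (hP : P.IsChain F.Adj) : (P.map Sum.inr).IsChain (graphJoin G F).Adj :=
  (isChain_map _).2 (hP.imp fun _ _ h => Or.inl (by simpa using h))

theorem isChain_map_inr_append_weave (F : SimpleGraph β) {P : List β} (hP : P.IsChain F.Adj)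
    (as : List α) {Ns : List (List β)} (hNs : ∀ N ∈ Ns, N.IsChain F.Adj) :
    (P.map Sum.inr ++ weave as Ns).IsChain (fun x y => x ≠ y → (graphJoin ⊤ F).Adj x y) := by
  have hmap : ∀ P : List β, P.IsChain F.Adj → (P.map Sum.inr : List (α ⊕ β)).IsChain
      (fun x y => x ≠ y → (graphJoin ⊤ F).Adj x y) := fun P hP =>
    (isChain_map_inr_graphJoin ⊤ hP).imp fun _ _ h _ => h
  induction as generalizing P Ns with
  | nil => simpa [weave] using hmap P hP
  | cons a as ih =>
    cases Ns with
    | nil => simpa [weave] using hmap P hP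
    | cons N Ns =>
      have hrest := ih (Ns := Ns) (hNs N (by simp)) fun N' hN' => hNs N' (by simp [hN'])
      refine (hmap P hP).append (hrest.cons fun y _ h => graphJoin_top_adj_inl F h)
        fun x _ y hy h => ?_
      obtain rfl : Sum.inl a = y := Option.some.inj hy
      exact (graphJoin_top_adj_inl F (Ne.symm h)).symm

theorem isChain_nodup_mem_map_inr_append_weave {F : SimpleGraph β} {P Q : List β}
    {Ms : List (List β)} (hc : F.IsPathCover (P :: Q :: Ms)) {as : List α} (hnd : as.Nodup)
    (hmem : ∀ a, a ∈ as) (hlen : as.length = Ms.length + 1) :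
    let L := P.map Sum.inr ++ weave as (Ms ++ [Q])
    L.IsChain (graphJoin ⊤ F).Adj ∧ L.Nodup ∧ ∀ x, x ∈ L := by
  have hperm : P.map Sum.inr ++ weave as (Ms ++ [Q]) ~
      as.map Sum.inl ++ (P :: Q :: Ms).flatten.map Sum.inr := by
    refine ((perm_weave (by simpa using hlen)).append_left _).trans ?_
    rw [← Multiset.coe_eq_coe]
    simp only [← Multiset.coe_add, flatten_append, flatten_cons, map_append, flatten_nil,
      append_nil]
    abel
  have hnd' := hperm.nodup_iff.2 <| nodup_append.2 ⟨hnd.map Sum.inl_injective,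
    hc.nodup.map Sum.inr_injective, by simp⟩
  refine ⟨isChain_adj_of_nodup hnd' ?_, hnd', fun z => hperm.mem_iff.2 ?_⟩
  · refine isChain_map_inr_append_weave F (hc.isChain P (by simp)) _ ?_
    simp only [mem_append, mem_singleton]
    rintro N (hN | rfl)
    exacts [hc.isChain N (by simp [hN]), hc.isChain _ (by simp)]
  · rcases z with a | z
    · simpa using hmem a
    · simpa using hc.mem_flatten z

/-- The Hamiltonian path is `P, a₁, M₁, …, aₜ, Mₜ, aₜ₊₁, Q` for an enumeration `a₁, …, aₜ₊₁`
of `α` that starts at `u` and ends at `v` whenever these lie in `α`. -/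
theorem hamConnected_graphJoin_top [Fintype α] {F : SimpleGraph β} {t : ℕ}
    (hF : F.HasPathCovers t) (ht : t + 1 = Fintype.card α) :
    HamConnected (graphJoin (⊤ : SimpleGraph α) F) := by
  intro u v huv
  obtain ⟨P, Q, Ms, hc, hP, hQ, rfl⟩ := hF u.getRight? v.getRight?
    fun b hu hv => huv (by simp_all)
  obtain ⟨as, hnd, hmem, hhead, hlast⟩ := exists_nodup_forall_mem_head?_getLast?
    (x := u.getLeft?) (y := v.getLeft?) fun a hu hv => huv (by simp_all)
  have hlen : as.length = Ms.length + 1 := by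
    rw [ht, ← toFinset_card_of_nodup hnd, show as.toFinset = Finset.univ from
      Finset.eq_univ_of_forall (by simpa using hmem), Finset.card_univ]
  obtain ⟨hchain, hnd', hmem'⟩ := isChain_nodup_mem_map_inr_append_weave hc hnd hmem hlen
  refine exists_isHamiltonian_of_isChain hchain hnd' hmem' ?_ ?_
  · rw [head?_append, head?_map, hP, head?_weave (by simpa using hlen)]
    rcases u with a | x
    · simp [hhead a rfl]
    · rfl
  · obtain ⟨as, b, rfl⟩ : ∃ as' b, as = as' ++ [b] := by
      rcases eq_nil_or_concat as with rfl | h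
      · simp at hlen
      · simpa using h
    rw [weave_append (by simpa using hlen)]
    rcases v with b' | y
    · obtain rfl : Q = [] := by simpa using hQ
      simpa [weave] using hlast b' rfl
    · have hQ : Q.getLast? = some y := hQ
      simp [weave, getLast?_cons, hQ]

end Join

end SimpleGraph

theorem join_regular_hamilton_connected_general (n k s : ℕ)
    (hs : 3 ≤ s) (hsk : s ≤ k - 1)
    (H : SimpleGraph (Fin (k - 1))) (hreg : ∀ v, gdeg H v = k - s) :
    HamConnected
      (graphJoin (⊤ : SimpleGraph (Fin s))
        ((⊤ : SimpleGraph (Fin (n - k - s + 1))) ⊕g H)) := by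
  have hcompl : ∀ v, Hᶜ.degree v ≤ s - 2 := fun v => by
    have h := hreg v
    rw [gdeg, Set.ncard_eq_toFinset_card', ← neighborFinset_def,
      card_neighborFinset_eq_degree] at h
    rw [degree_compl, Fintype.card_fin]
    omega
  have hH : H.HasPathCovers (s - 2) :=
    hasPathCovers_of_degree_compl_le (by omega) (by rw [Fintype.card_fin]; omega) hcompl
  exact hamConnected_graphJoin_top (hasPathCovers_top.sum hH) (by rw [Fintype.card_fin]; omega)

/-- **Case `3 ≤ s ≤ k-1` of Theorem 3.1.** If `H` is a `(k-s)`-regular graph on `k-1`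
vertices with `3 ≤ s ≤ k-1`, `k ≥ 2`, and `n ≥ 11k`, then
`K_s ∨ (K_{n-k-s+1} + H)` is Hamilton-connected. -/
theorem join_regular_hamilton_connected (n k s : ℕ) (hk : 2 ≤ k)
    (hs : 3 ≤ s) (hsk : s ≤ k - 1) (hn : 11 * k ≤ n)
    (H : SimpleGraph (Fin (k - 1))) (hreg : ∀ v, gdeg H v = k - s) :
    HamConnected
      (graphJoin (⊤ : SimpleGraph (Fin s))
        ((⊤ : SimpleGraph (Fin (n - k - s + 1))) ⊕g H)) :=
  join_regular_hamilton_connected_general n k s hs hsk H hreg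

end
end

section
/- For every graph G in S_k^{(2)}(n) ∪ T_k^{(2)}(n) with n ≥ k^4 + 5k^3 + 2k^2 + 8k + 12 and k ≥ 2, the signless Laplacian spectral radius satisfies q(G) > 2n − 2k − 1. -/
/-! The vertices `i ≤ n - k` span a clique `S` on `s = n - k + 1` vertices in both
`S_n^k` and `T_n^k`, and `G` misses only `t` of its edges, where `4t < s`. For the indicator
vector `x` of `S`, `xᵀ Q(G) x = ∑_{i ∈ S} (d(i) + d_S(i)) ≥ 2 ∑_{i ∈ S} d_S(i) ≥ 2 (s (s - 1) - 2t)`,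
so the Rayleigh bound `xᵀ Q x ≤ q(G) xᵀ x` gives `q(G) ≥ 2 (s - 1) - 4t / s > 2 (n - k) - 1`. -/

open Classical SimpleGraph

noncomputable section

/-- `S_n^k = K_k ∨ (K_{n-2k+1} + (k-1)K_1)`, realized on `Fin n`: vertices with value `< k`
form the dominating clique `K_k`, vertices with value `≤ n-k` form the clique `K_{n-k+1}`,
and the remaining `k-1` vertices are adjacent exactly to the first `k` vertices. -/
noncomputable def Sgraph (n k : ℕ) : SimpleGraph (Fin n) :=
  SimpleGraph.fromRel (fun i j => i.val < k ∨ (i.val ≤ n - k ∧ j.val ≤ n - k))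

/-- `T_n^k = K_2 ∨ (K_{n-k-1} + K_{k-1})`, realized on `Fin n`: vertices with value `< 2`
are the dominating `K_2`, values `≤ n-k` form the clique `K_{n-k+1}`, and values `> n-k`
(of which there are `k-1`) form a clique joined to the first two vertices. -/
noncomputable def Tgraph (n k : ℕ) : SimpleGraph (Fin n) :=
  SimpleGraph.fromRel (fun i j =>
    i.val < 2 ∨ (i.val ≤ n - k ∧ j.val ≤ n - k) ∨ (n - k < i.val ∧ n - k < j.val))

/-- Edges of `S_n^k` (resp. `T_n^k`) with both endpoints of degree `n-1` or `n-k`,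
i.e. both endpoints with value `≤ n-k`. -/
def E0 {n : ℕ} (G : SimpleGraph (Fin n)) (k : ℕ) : Set (Sym2 (Fin n)) :=
  {e | e ∈ G.edgeSet ∧ ∀ i ∈ e, i.val ≤ n - k}

/-- The family `𝒮_k^{(2)}(n)`. -/
def SFam2 (n k : ℕ) : Set (SimpleGraph (Fin n)) :=
  {G | ∃ E' : Set (Sym2 (Fin n)), E' ⊆ E0 (Sgraph n k) k ∧ E'.ncard = k * (k - 1) / 4 + 1 ∧
    G = (Sgraph n k).deleteEdges E'}

/-- The family `𝒯_k^{(2)}(n)`. -/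
def TFam2 (n k : ℕ) : Set (SimpleGraph (Fin n)) :=
  {G | ∃ E' : Set (Sym2 (Fin n)), E' ⊆ E0 (Tgraph n k) k ∧ E'.ncard = (k - 1) / 2 + 1 ∧
    G = (Tgraph n k).deleteEdges E'}

section
open Finset Matrix

theorem Matrix.IsHermitian.dotProduct_mulVec_le_sSup_spectrum_mul_s10 {ι : Type*} [Fintype ι]
    [DecidableEq ι] {A : Matrix ι ι ℝ} (hA : A.IsHermitian) (x : ι → ℝ) :
    x ⬝ᵥ (A *ᵥ x) ≤ sSup (spectrum ℝ A) * (x ⬝ᵥ x) := by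
  set μ := sSup (spectrum ℝ A)
  have hpsd : (algebraMap ℝ _ μ - A).PosSemidef := by
    refine posSemidef_iff_isHermitian_and_spectrum_nonneg.mpr
      ⟨(IsSelfAdjoint.algebraMap _ (IsSelfAdjoint.all μ)).sub hA, ?_⟩
    rw [← spectrum.singleton_sub_eq]
    rintro _ ⟨_, rfl, a, ha, rfl⟩
    exact sub_nonneg.mpr (le_csSup (finite_real_spectrum (A := A)).bddAbove ha)
  have := hpsd.dotProduct_mulVec_nonneg x
  simp only [star_trivial, sub_mulVec, dotProduct_sub, Algebra.algebraMap_eq_smul_one,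
    smul_mulVec, one_mulVec, dotProduct_smul, smul_eq_mul] at this
  linarith

variable {V : Type*} [Fintype V] [DecidableEq V]

theorem signlessLap_isHermitian (G : SimpleGraph V) : (signlessLap G).IsHermitian := by
  ext i j
  by_cases h : i = j
  · subst h; rfl
  · simp [signlessLap, h, Ne.symm h, SimpleGraph.adj_comm]

theorem indicator_dotProduct_signlessLap_mulVec (G : SimpleGraph V) [DecidableRel G.Adj]
    (S : Finset V) :
    (S : Set V).indicator 1 ⬝ᵥ (signlessLap G *ᵥ (S : Set V).indicator 1) =
      ∑ i ∈ S, ((gdeg G i : ℝ) + #{j ∈ S | G.Adj i j}) := by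
  simp only [dotProduct, mulVec, Set.indicator_apply, mem_coe, Pi.one_apply, ite_mul, one_mul,
    zero_mul, sum_ite_mem, univ_inter]
  refine sum_congr rfl fun i hi => ?_
  simp [signlessLap, sum_add_distrib, hi]
  -- `signlessLap` decides adjacency classically, not by the given instance
  convert (natCast_card_filter (R := ℝ) (G.Adj i) S).symm

omit [DecidableEq V] in
theorem card_filter_adj_le_gdeg (G : SimpleGraph V) [DecidableRel G.Adj] (S : Finset V) (i : V) :
    #{j ∈ S | G.Adj i j} ≤ gdeg G i := by
  rw [gdeg, ← Set.ncard_coe_finset]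
  exact Set.ncard_le_ncard (fun j hj => (mem_filter.mp hj).2) (Set.toFinite _)

theorem sum_degree_fromEdgeSet_le (E : Set (Sym2 V)) :
    ∑ i, (SimpleGraph.fromEdgeSet E).degree i ≤ 2 * E.ncard := by
  rw [SimpleGraph.sum_degrees_eq_twice_card_edges, ← Set.ncard_coe_finset,
    SimpleGraph.coe_edgeFinset, SimpleGraph.edgeSet_fromEdgeSet]
  exact Nat.mul_le_mul_left 2 (Set.ncard_le_ncard Set.sdiff_subset (Set.toFinite E))

theorem card_mul_card_sub_one_le_sum_card_adj_deleteEdges (B : SimpleGraph V) {S : Finset V}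
    (hS : B.IsClique (S : Set V)) (E : Set (Sym2 V)) :
    #S * (#S - 1) ≤ ∑ i ∈ S, #{j ∈ S | (B.deleteEdges E).Adj i j} + 2 * E.ncard := by
  set H := SimpleGraph.fromEdgeSet E
  have hcover : ∀ i ∈ S, #S - 1 ≤ #{j ∈ S | (B.deleteEdges E).Adj i j} + H.degree i := by
    intro i hi
    calc #S - 1 = #(S.erase i) := (card_erase_of_mem hi).symm
      _ ≤ #({j ∈ S | (B.deleteEdges E).Adj i j} ∪ H.neighborFinset i) := card_le_card ?_
      _ ≤ _ := card_union_le _ _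
    intro j hj
    obtain ⟨hji, hjS⟩ := mem_erase.mp hj
    by_cases hE : s(i, j) ∈ E
    · exact mem_union_right _ ((H.mem_neighborFinset _ _).mpr ⟨hE, Ne.symm hji⟩)
    · exact mem_union_left _ (mem_filter.mpr
        ⟨hjS, (SimpleGraph.deleteEdges_adj ..).mpr ⟨hS hi hjS (Ne.symm hji), hE⟩⟩)
  calc #S * (#S - 1) = ∑ _i ∈ S, (#S - 1) := by rw [sum_const, smul_eq_mul]
    _ ≤ ∑ i ∈ S, (#{j ∈ S | (B.deleteEdges E).Adj i j} + H.degree i) := sum_le_sum hcover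
    _ = ∑ i ∈ S, #{j ∈ S | (B.deleteEdges E).Adj i j} + ∑ i ∈ S, H.degree i := sum_add_distrib
    _ ≤ _ := Nat.add_le_add_left
      ((sum_le_sum_of_subset (subset_univ S)).trans (sum_degree_fromEdgeSet_le E)) _

theorem qrad_deleteEdges_gt_of_isClique (B : SimpleGraph V) {S : Finset V}
    (hS : B.IsClique (S : Set V)) {E : Set (Sym2 V)} (hE : 4 * E.ncard < #S) :
    2 * ((#S : ℝ) - 1) - 1 < qrad (B.deleteEdges E) := by
  set G := B.deleteEdges E
  set x : V → ℝ := (S : Set V).indicator 1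
  have hxx : x ⬝ᵥ x = #S := by
    simp [x, dotProduct, Set.indicator_apply]
  have hray := (signlessLap_isHermitian G).dotProduct_mulVec_le_sSup_spectrum_mul_s10 x
  rw [indicator_dotProduct_signlessLap_mulVec, hxx, sum_add_distrib] at hray
  have hcount : (#S : ℝ) * (#S - 1) ≤ ∑ i ∈ S, (#{j ∈ S | G.Adj i j} : ℝ) + 2 * E.ncard := by
    have h := card_mul_card_sub_one_le_sum_card_adj_deleteEdges B hS E
    rw [← Nat.cast_le (α := ℝ)] at h
    push_cast [show 1 ≤ #S by omega] at h
    exact h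
  have hdeg : ∑ i ∈ S, (#{j ∈ S | G.Adj i j} : ℝ) ≤ ∑ i ∈ S, (gdeg G i : ℝ) :=
    sum_le_sum fun i _ => by exact_mod_cast card_filter_adj_le_gdeg G S i
  have hE' : 4 * (E.ncard : ℝ) < #S := by exact_mod_cast hE
  refine lt_of_mul_lt_mul_right (a := (#S : ℝ)) ?_ (Nat.cast_nonneg _)
  rw [qrad]
  linarith

theorem Fin.card_filter_val_le {n m : ℕ} (h : m < n) : #{i : Fin n | i.val ≤ m} = m + 1 := by
  simp only [Nat.le_iff_lt_add_one, Fin.card_filter_val_lt]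
  omega

theorem qrad_deleteEdges_gt_of_isClique_val_le {n k : ℕ} (hk : 0 < k) (hkn : k ≤ n)
    {B : SimpleGraph (Fin n)} (hB : B.IsClique {i : Fin n | i.val ≤ n - k})
    {E : Set (Sym2 (Fin n))} (hE : 4 * E.ncard < n - k + 1) :
    2 * (n : ℝ) - 2 * k - 1 < qrad (B.deleteEdges E) := by
  have hS : #{i : Fin n | i.val ≤ n - k} = n - k + 1 := Fin.card_filter_val_le (by omega)
  have h := qrad_deleteEdges_gt_of_isClique B (by simpa using hB) (hS ▸ hE)
  rw [hS, Nat.cast_add, Nat.cast_sub hkn, Nat.cast_one] at h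
  linarith

end

theorem isClique_Sgraph (n k : ℕ) : (Sgraph n k).IsClique {i : Fin n | i.val ≤ n - k} :=
  fun _ hi _ hj hij => (fromRel_adj ..).mpr ⟨hij, Or.inl (Or.inr ⟨hi, hj⟩)⟩

theorem isClique_Tgraph (n k : ℕ) : (Tgraph n k).IsClique {i : Fin n | i.val ≤ n - k} :=
  fun _ hi _ hj hij => (fromRel_adj ..).mpr ⟨hij, Or.inl (Or.inr (Or.inl ⟨hi, hj⟩))⟩

/-- **Claim 1 in Lemma 3.3.** For every `G ∈ 𝒮_k^{(2)}(n) ∪ 𝒯_k^{(2)}(n)` with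
`n ≥ k⁴ + 5k³ + 2k² + 8k + 12` and `k ≥ 2`, `q(G) > 2n - 2k - 1`. -/
theorem qrad_gt_of_fam2 (n k : ℕ) (hk : 2 ≤ k)
    (hn : k ^ 4 + 5 * k ^ 3 + 2 * k ^ 2 + 8 * k + 12 ≤ n)
    (G : SimpleGraph (Fin n)) (hG : G ∈ SFam2 n k ∪ TFam2 n k) :
    2 * (n : ℝ) - 2 * k - 1 < qrad G := by
  have hn' : k * k + 3 * k + 4 < n := by nlinarith
  rcases hG with ⟨E, -, hE, rfl⟩ | ⟨E, -, hE, rfl⟩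
  · refine qrad_deleteEdges_gt_of_isClique_val_le (by omega) (by omega) (isClique_Sgraph n k) ?_
    have h1 := Nat.div_mul_le_self (k * (k - 1)) 4
    have h2 : k * (k - 1) ≤ k * k := Nat.mul_le_mul_left k (Nat.sub_le k 1)
    omega
  · exact qrad_deleteEdges_gt_of_isClique_val_le (by omega) (by omega) (isClique_Tgraph n k)
      (by omega)
end
end

section
/- Let n, k, t be integers with k ≥ 2, n ≥ 11k and 1 ≤ t ≤ 2n/3 + 1/2. Then binom(t,2) + ((n/2 + t − 1)(n−t))/2 ≤ (5/12)n^2 − (3/8)n < binom(n−k,2) + k(k+1). -/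
/-- **Case 1 counting inequality in the clique-number claim.** For integers `k ≥ 2`,
`n ≥ 11k` and `1 ≤ t ≤ 2n/3 + 1/2`, one has
`C(t,2) + ((n/2 + t - 1)(n - t))/2 ≤ (5/12)n² - (3/8)n < C(n-k,2) + k(k+1)`. -/
theorem case1_counting (n k t : ℕ) (hk : 2 ≤ k) (hn : 11 * k ≤ n) (ht1 : 1 ≤ t)
    (ht2 : (t : ℝ) ≤ 2 * (n : ℝ) / 3 + 1 / 2) :
    (t : ℝ) * ((t : ℝ) - 1) / 2 +
        (((n : ℝ) / 2 + (t : ℝ) - 1) * ((n : ℝ) - (t : ℝ))) / 2 ≤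
      5 / 12 * (n : ℝ) ^ 2 - 3 / 8 * (n : ℝ) ∧
    5 / 12 * (n : ℝ) ^ 2 - 3 / 8 * (n : ℝ) <
      ((n : ℝ) - (k : ℝ)) * ((n : ℝ) - (k : ℝ) - 1) / 2 + (k : ℝ) * ((k : ℝ) + 1) := by
  have hk' : (2 : ℝ) ≤ (k : ℝ) := by exact_mod_cast hk
  have hn' : 11 * (k : ℝ) ≤ (n : ℝ) := by exact_mod_cast hn
  have hn0 : (0 : ℝ) ≤ (n : ℝ) := Nat.cast_nonneg n
  constructor
  · nlinarith [mul_le_mul_of_nonneg_left ht2 hn0]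
  · nlinarith [mul_le_mul_of_nonneg_left hn' (by linarith : (0:ℝ) ≤ (n:ℝ) - 11*k),
      sq_nonneg ((n:ℝ) - 11*k), sq_nonneg (k:ℝ)]
end

section
/- Let k ≥ 2 and n ≥ k^4 + 5k^3 + 2k^2 + 8k + 12, and let q > 2n − 2k − 1. Then k(k−1)·(1 + k/(q−k))^2 − 4·(⌊k(k−1)/4⌋ + 1)·(1 − (k^2+6k+6)/(2(q−n+1)))^2 < 0. -/
private lemma appendix_aux (K C d e : ℝ) (hK : 2 ≤ K) (hC : K*(K-1)+2 ≤ 4*C)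
    (hd0 : 0 < d) (he0 : 0 < e) (hd1 : 2*K^3*d ≤ 1) (he1 : 4*K^2*e ≤ 3) :
    K*(K-1)*(1+d)^2 - 4*C*(1-e)^2 < 0 := by
  have hK0 : (0:ℝ) < K := by linarith
  have h1 : 2*K^3*(1+d) ≤ 2*K^3 + 1 := by nlinarith
  have hb0 : (0:ℝ) ≤ 4*K^2 - 3 := by nlinarith
  have h2 : 4*K^2 - 3 ≤ 4*K^2*(1-e) := by nlinarith
  have A1 : (2*K^3*(1+d))^2 ≤ (2*K^3 + 1)^2 :=
    pow_le_pow_left₀ (by positivity) h1 2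
  have A2 : (4*K^2 - 3)^2 ≤ (4*K^2*(1-e))^2 :=
    pow_le_pow_left₀ hb0 h2 2
  have e1 : (0:ℝ) ≤ K^4*(8*K^2 - 23) := mul_nonneg (by positivity) (by nlinarith [sq_nonneg (K-2)])
  have e2 : (0:ℝ) ≤ K^3*(8*K^2 - 9) := mul_nonneg (by positivity) (by nlinarith [sq_nonneg (K-2)])
  have hpoly : 4*K*(K-1)*(2*K^3+1)^2 < K^2*(K*(K-1)+2)*(4*K^2-3)^2 := by
    nlinarith [e1, e2, hK0, sq_nonneg K]
  have hpoly' := mul_lt_mul_of_pos_left hpoly (show (0:ℝ) < 4*K^4 by positivity)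
  have B1 : 16*K^4*(K*(K-1))*(2*K^3*(1+d))^2 ≤ 16*K^4*(K*(K-1))*(2*K^3+1)^2 :=
    mul_le_mul_of_nonneg_left A1 (by nlinarith)
  have B2 : 4*K^6*(K*(K-1)+2)*(4*K^2-3)^2 ≤ 4*K^6*(K*(K-1)+2)*(4*K^2*(1-e))^2 :=
    mul_le_mul_of_nonneg_left A2 (by nlinarith)
  have hbig : 64*K^10*(K*(K-1)*(1+d)^2) < 64*K^10*((K*(K-1)+2)*(1-e)^2) := by
    nlinarith [B1, hpoly', B2]
  have hgoal2 : K*(K-1)*(1+d)^2 < (K*(K-1)+2)*(1-e)^2 :=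
    (mul_lt_mul_iff_right₀ (show (0:ℝ) < 64*K^10 by positivity)).mp hbig
  have hc2 : (K*(K-1)+2)*(1-e)^2 ≤ 4*C*(1-e)^2 :=
    mul_le_mul_of_nonneg_right hC (sq_nonneg _)
  linarith

/-- **Appendix inequality (2).** For `k ≥ 2`, `n ≥ k⁴ + 5k³ + 2k² + 8k + 12` and any real
`q > 2n - 2k - 1`,
`k(k-1)(1 + k/(q-k))² - 4(⌊k(k-1)/4⌋ + 1)(1 - (k² + 6k + 6)/(2(q - n + 1)))² < 0`. -/
theorem appendix_inequality (n k : ℕ) (q : ℝ) (hk : 2 ≤ k)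
    (hn : k ^ 4 + 5 * k ^ 3 + 2 * k ^ 2 + 8 * k + 12 ≤ n)
    (hq : 2 * (n : ℝ) - 2 * k - 1 < q) :
    (k : ℝ) * ((k : ℝ) - 1) * (1 + (k : ℝ) / (q - k)) ^ 2 -
      4 * ((k * (k - 1) / 4 + 1 : ℕ) : ℝ) *
        (1 - ((k : ℝ) ^ 2 + 6 * k + 6) / (2 * (q - n + 1))) ^ 2 < 0 := by
  have hnat : k * (k - 1) + 2 ≤ 4 * (k * (k - 1) / 4 + 1) := by
    have hev : Even (k * (k - 1)) := by
      rcases Nat.even_or_odd k with h | h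
      · exact h.mul_right _
      · exact (Nat.Odd.sub_odd h odd_one).mul_left _
    obtain ⟨t, ht⟩ := hev
    omega
  have hK : (2:ℝ) ≤ (k:ℝ) := by exact_mod_cast hk
  have hK0 : (0:ℝ) < (k:ℝ) := by linarith
  have hN : (k:ℝ)^4 + 5*(k:ℝ)^3 + 2*(k:ℝ)^2 + 8*(k:ℝ) + 12 ≤ (n:ℝ) := by
    exact_mod_cast hn
  have hC : (k:ℝ) * ((k:ℝ) - 1) + 2 ≤ 4 * ((k * (k - 1) / 4 + 1 : ℕ) : ℝ) := by
    have h2 : ((k * (k - 1) + 2 : ℕ) : ℝ) ≤ ((4 * (k * (k - 1) / 4 + 1) : ℕ) : ℝ) :=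
      Nat.cast_le.mpr hnat
    push_cast [Nat.cast_sub (by omega : 1 ≤ k)] at h2 ⊢
    linarith
  have hK3 : (0:ℝ) ≤ (k:ℝ)^3 := by positivity
  have hK2 : (0:ℝ) ≤ (k:ℝ)^2 := by positivity
  have hx : 2*(k:ℝ)^4 ≤ q - (k:ℝ) := by nlinarith
  have hxpos : (0:ℝ) < q - (k:ℝ) := by nlinarith
  have hy : 2*(k:ℝ)^4 + 10*(k:ℝ)^3 + 4*(k:ℝ)^2 + 12*(k:ℝ) + 24 ≤ 2*(q - (n:ℝ) + 1) := by
    nlinarith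
  have hypos : (0:ℝ) < 2*(q - (n:ℝ) + 1) := by nlinarith
  have hd0 : 0 < (k:ℝ) / (q - (k:ℝ)) := div_pos hK0 hxpos
  have he0 : 0 < ((k:ℝ)^2 + 6*(k:ℝ) + 6) / (2*(q - (n:ℝ) + 1)) := div_pos (by nlinarith) hypos
  have hd1 : 2*(k:ℝ)^3*((k:ℝ) / (q - (k:ℝ))) ≤ 1 := by
    rw [← mul_div_assoc, div_le_one hxpos]
    nlinarith
  have he1 : 4*(k:ℝ)^2*(((k:ℝ)^2 + 6*(k:ℝ) + 6) / (2*(q - (n:ℝ) + 1))) ≤ 3 := by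
    rw [← mul_div_assoc, div_le_iff₀ hypos]
    nlinarith [mul_nonneg hK2 (by linarith : (0:ℝ) ≤ (k:ℝ) - 2)]
  exact appendix_aux (k:ℝ) _ _ _ hK hC hd0 he0 hd1 he1
end
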